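/- arXiv:1604.06567 — 6 statements merged into one kernel-verified Lean document; each statement's English description precedes it below -/
import Mathlib

section
/- For integers k ≥ 1, d ≥ k, and reals α, β ≥ 0, the single-repair cut-set capacity C = Σ_{i=0}^{k-1} min((d-i)β, α) is at least B if and only if (α, γ=dβ) lies on or above the storage-bandwidth tradeoff curve; in particular, if α = B/k then C ≥ B requires β ≥ B/(k(d-k+1)). -/
open Finset

theorem Antitone.card_mul_le_sum_min_iff {f : ℕ → ℝ} (hf : Antitone f) {k : ℕ} (hk : 0 < k)
    (a : ℝ) : k * a ≤ ∑ i ∈ range k, min (f i) a ↔ a ≤ f (k - 1) := by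
  constructor
  · intro hsum
    by_contra! hlast
    have hlt : ∑ i ∈ range k, min (f i) a < ∑ _i ∈ range k, a :=
      sum_lt_sum (fun i _ ↦ min_le_right _ _)
        ⟨k - 1, mem_range.mpr (by omega), (min_le_left _ _).trans_lt hlast⟩
    rw [sum_const, card_range, nsmul_eq_mul] at hlt
    linarith
  · intro hlast
    have hmin : ∀ i ∈ range k, min (f i) a = a := fun i hi ↦
      min_eq_right (hlast.trans (hf (Nat.le_pred_of_lt (mem_range.mp hi))))
    rw [sum_congr rfl hmin, sum_const, card_range, nsmul_eq_mul]

theorem stmt_0_general (k d : ℕ) (hk : 1 ≤ k) (hdk : k ≤ d) (B α β : ℝ)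
    (hβ : 0 ≤ β) (hαB : α = B / k) :
    (∑ i ∈ Finset.range k, min (((d : ℝ) - i) * β) α) ≥ B ↔
      β ≥ B / (k * ((d : ℝ) - k + 1)) := by
  subst hαB
  have hk0 : (k : ℝ) ≠ 0 := by positivity
  have hgap : (0 : ℝ) < d - k + 1 := by
    have : (k : ℝ) ≤ d := by exact_mod_cast hdk
    linarith
  have hf : Antitone fun i : ℕ ↦ ((d : ℝ) - i) * β := fun i j hij ↦
    mul_le_mul_of_nonneg_right (sub_le_sub_left (by exact_mod_cast hij) _) hβ
  have hB : (k : ℝ) * (B / k) = B := mul_div_cancel₀ B hk0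
  have hsum := hf.card_mul_le_sum_min_iff hk (B / k)
  rw [hB] at hsum
  rw [ge_iff_le, ge_iff_le, hsum, Nat.cast_pred hk, div_mul_eq_div_div, div_le_iff₀ hgap]
  ring_nf

/-- Single-repair cut-set capacity at the minimum-storage point `α = B/k`:
the capacity `∑_{i=0}^{k-1} min((d-i)β, α)` is at least `B` iff
`β ≥ B/(k(d-k+1))`. -/
theorem stmt_0 (k d : ℕ) (hk : 1 ≤ k) (hdk : k ≤ d) (B α β : ℝ)
    (hB : 0 < B) (hα : 0 ≤ α) (hβ : 0 ≤ β) (hαB : α = B / k) :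
    (∑ i ∈ Finset.range k, min (((d : ℝ) - i) * β) α) ≥ B ↔
      β ≥ B / (k * ((d : ℝ) - k + 1)) :=
  stmt_0_general k d hk hdk B α β hβ hαB
end

section
/- Let k, t, d, g be positive integers with k = g·t and d ≥ k, and let α, β ≥ 0. Among all sequences u = (u_0,…,u_{g'-1}) of positive integers with each u_i ≤ t and Σ u_i = k, the quantity Σ_{i=0}^{g'-1} min(u_i·α, (d - Σ_{j<i} u_j)·β) is minimized by the sequence u = (t, t, …, t) of length g. -/
open Finset

/-!
Split the indices of `u` into the set `T` where the `α`-branch of the minimum is taken, of total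
size `a`, and the rest `C`. Everything before the `j`-th element of `C` is an index of `T` or one
of the `j` earlier elements of `C`, each of size at most `t`, so that element contributes at least
`(d - a - j t) β`; moreover `|C| t ≥ k - a`. On the uniform side, write `a = p t + r` with
`r < t`: taking the `α`-branch on the first `p` blocks and the `β`-branch on the last `g - p - 1`
leaves one mixed block, bounded by interpolating between the two branches with weights `r / t`
and `1 - r / t`.
-/

theorem Finset.sum_range_card_le_sum_of_rank {ι M : Type*} [LinearOrder ι] [AddCommMonoid M]
    [PartialOrder M] [IsOrderedAddMonoid M] (s : Finset ι) (f : ℕ → M) (g : ι → M)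
    (h : ∀ i ∈ s, f #{j ∈ s | j < i} ≤ g i) :
    ∑ j ∈ range #s, f j ≤ ∑ i ∈ s, g i := by
  classical
  induction s using Finset.induction_on_max with
  | empty => simp
  | insert a s hlt ih =>
    have ha : a ∉ s := fun has => (hlt a has).false
    have hrank_a : #{j ∈ insert a s | j < a} = #s := by
      rw [filter_insert, if_neg (lt_irrefl a), filter_true_of_mem hlt]
    have hrank : ∀ i ∈ s, {j ∈ insert a s | j < i} = {j ∈ s | j < i} := fun i hi => by
      rw [filter_insert, if_neg (hlt i hi).not_gt]
    rw [card_insert_of_notMem ha, sum_range_succ, sum_insert ha, add_comm (g a)]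
    refine add_le_add (ih fun i hi => ?_) ?_
    · rw [← hrank i hi]; exact h i (mem_insert_of_mem hi)
    · rw [← hrank_a]; exact h a (mem_insert_self a s)

theorem min_mul_le_convex_comb {t r m D α β : ℝ} (ht : 0 < t) (hr₀ : 0 ≤ r) (hrt : r ≤ t)
    (hD : m * t ≤ D) (hβ : 0 ≤ β) :
    min (t * α) (D * β) ≤ r * α + (D - m * r) * β := by
  have h₁ : r * min (t * α) (D * β) ≤ r * (t * α) :=
    mul_le_mul_of_nonneg_left (min_le_left _ _) hr₀
  have h₂ : (t - r) * min (t * α) (D * β) ≤ (t - r) * (D * β) :=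
    mul_le_mul_of_nonneg_left (min_le_right _ _) (sub_nonneg.mpr hrt)
  have h₃ : r * β * (m * t) ≤ r * β * D := mul_le_mul_of_nonneg_left hD (mul_nonneg hr₀ hβ)
  refine le_of_mul_le_mul_left ?_ ht
  linarith

theorem sum_range_min_le_add_sum_sub {t r D α β : ℝ} (n : ℕ) (ht : 0 < t) (hr₀ : 0 ≤ r)
    (hrt : r ≤ t) (hD : n * t ≤ D) (hα : 0 ≤ α) (hβ : 0 ≤ β) :
    ∑ j ∈ range n, min (t * α) ((D - j * t) * β) ≤
      r * α + ∑ j ∈ range n, (D - r - j * t) * β := by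
  have hshift : ∑ j ∈ range n, (D - r - j * t) * β =
      ∑ j ∈ range n, (D - j * t) * β - n * r * β := by
    simp only [sub_right_comm D r, sub_mul, sum_sub_distrib, sum_const, card_range, nsmul_eq_mul]
    ring
  rw [hshift]
  cases n with
  | zero => simpa using mul_nonneg hr₀ hα
  | succ n =>
    have hfirst := min_mul_le_convex_comb (α := α) ht hr₀ hrt hD hβ
    have hrest : ∑ j ∈ range n, min (t * α) ((D - (j + 1 : ℕ) * t) * β) ≤
        ∑ j ∈ range n, (D - (j + 1 : ℕ) * t) * β :=
      sum_le_sum fun _ _ => min_le_right _ _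
    rw [sum_range_succ', sum_range_succ' (fun j : ℕ => (D - j * t) * β)]
    push_cast at hfirst hrest ⊢
    simp only [zero_mul, sub_zero]
    linarith

theorem sum_range_min_le_of_le_add_mul {t g a m : ℕ} {D α β : ℝ} (ht : 0 < t)
    (ha : a ≤ g * t) (hm : g * t ≤ a + m * t) (hD : (g * t : ℝ) ≤ D) (hα : 0 ≤ α) (hβ : 0 ≤ β) :
    ∑ i ∈ range g, min (t * α) ((D - i * t) * β) ≤
      a * α + ∑ j ∈ range m, max 0 (D - a - j * t) * β := by
  set p := a / t
  set r := a % t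
  have hpr : p * t + r = a := Nat.div_add_mod' a t
  have hr : r < t := Nat.mod_lt a ht
  have hpg : p ≤ g := Nat.le_of_mul_le_mul_right (by omega) ht
  have hgpm : g - p ≤ m := by
    have : g * t < (p + 1 + m) * t := by nlinarith
    have := Nat.lt_of_mul_lt_mul_right this
    omega
  have hsplit : ∑ i ∈ range g, min (t * α) ((D - i * t) * β) =
      ∑ i ∈ range p, min (t * α) ((D - i * t) * β) +
        ∑ j ∈ range (g - p), min (t * α) ((D - p * t - j * t) * β) := by
    rw [← Nat.add_sub_cancel' hpg, sum_range_add, Nat.add_sub_cancel_left]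
    congr 1
    refine sum_congr rfl fun j _ => ?_
    push_cast
    ring_nf
  have hhead : ∑ i ∈ range p, min (t * α) ((D - i * t) * β) ≤ p * (t * α) := by
    simpa using
      sum_le_card_nsmul (range p) _ _ fun i _ => min_le_left (t * α) ((D - i * t) * β)
  have htail := sum_range_min_le_add_sum_sub (g - p) (D := D - p * t) (α := α) (β := β)
    (Nat.cast_pos.mpr ht) (Nat.cast_nonneg r) (by exact_mod_cast hr.le)
    (by rw [Nat.cast_sub hpg]; linarith) hα hβ
  have hmax : ∑ j ∈ range (g - p), (D - p * t - r - j * t) * β ≤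
      ∑ j ∈ range m, max 0 (D - a - j * t) * β := by
    calc ∑ j ∈ range (g - p), (D - p * t - r - j * t) * β
        ≤ ∑ j ∈ range (g - p), max 0 (D - a - j * t) * β := by
          refine sum_le_sum fun j _ => mul_le_mul_of_nonneg_right ?_ hβ
          rw [← hpr]; push_cast
          exact le_max_of_le_right (by linarith)
      _ ≤ ∑ j ∈ range m, max 0 (D - a - j * t) * β :=
          sum_le_sum_of_subset_of_nonneg (range_subset_range.mpr hgpm)
            fun j _ _ => mul_nonneg (le_max_left _ _) hβ
  have ha' : (a : ℝ) * α = p * (t * α) + r * α := by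
    rw [← hpr]; push_cast; ring
  linarith

theorem exists_le_sum_min {t n k : ℕ} {D α β : ℝ} (u : ℕ → ℕ) (hu : ∀ i < n, u i ≤ t)
    (hsum : ∑ i ∈ range n, u i = k) (hD : (k : ℝ) ≤ D) (hβ : 0 ≤ β) :
    ∃ a m : ℕ, a ≤ k ∧ k ≤ a + m * t ∧
      a * α + ∑ j ∈ range m, max 0 (D - a - j * t) * β ≤
        ∑ i ∈ range n, min (u i * α) ((D - ∑ j ∈ range i, (u j : ℝ)) * β) := by
  classical
  set P : ℕ → Prop := fun i => (u i : ℝ) * α ≤ (D - ∑ j ∈ range i, (u j : ℝ)) * β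
  set T := {i ∈ range n | P i}
  set C := {i ∈ range n | ¬P i}
  have hTC : ∑ i ∈ T, u i + ∑ i ∈ C, u i = k := by rw [sum_filter_add_sum_filter_not, hsum]
  have hCt : ∑ i ∈ C, u i ≤ #C * t :=
    sum_le_card_nsmul C u t fun i hi => hu i (mem_range.mp (mem_filter.mp hi).1)
  have hprefix : ∀ i ∈ C, ∑ j ∈ range i, u j ≤ ∑ j ∈ T, u j + #{j ∈ C | j < i} * t := by
    intro i hi
    have hin : i ≤ n := (mem_range.mp (mem_filter.mp hi).1).le
    have hlow : {j ∈ range i | ¬P j} = {j ∈ C | j < i} := by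
      ext j
      simp only [C, mem_filter, mem_range]
      exact ⟨fun ⟨hj, hP⟩ => ⟨⟨by omega, hP⟩, hj⟩, fun ⟨⟨_, hP⟩, hj⟩ => ⟨hj, hP⟩⟩
    rw [← sum_filter_add_sum_filter_not (range i) P, hlow]
    refine add_le_add
      (sum_le_sum_of_subset (filter_subset_filter P (range_subset_range.mpr hin)))
      (sum_le_card_nsmul _ u t fun j hj => ?_)
    exact hu j (mem_range.mp (mem_filter.mp (mem_filter.mp hj).1).1)
  refine ⟨∑ i ∈ T, u i, #C, by omega, by omega, ?_⟩
  have hTsum : ∑ i ∈ T, min (u i * α) ((D - ∑ j ∈ range i, (u j : ℝ)) * β) =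
      ((∑ i ∈ T, u i : ℕ) : ℝ) * α := by
    rw [Nat.cast_sum, sum_mul]
    exact sum_congr rfl fun i hi => min_eq_left (mem_filter.mp hi).2
  have hCsum : ∑ j ∈ range #C, max 0 (D - (∑ i ∈ T, u i : ℕ) - j * t) * β ≤
      ∑ i ∈ C, min (u i * α) ((D - ∑ j ∈ range i, (u j : ℝ)) * β) := by
    refine sum_range_card_le_sum_of_rank C _ _ fun i hi => ?_
    rw [min_eq_right (le_of_not_ge (mem_filter.mp hi).2)]
    refine mul_le_mul_of_nonneg_right (max_le ?_ ?_) hβ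
    · have hin : i ≤ n := (mem_range.mp (mem_filter.mp hi).1).le
      have hik : ∑ j ∈ range i, u j ≤ k := hsum ▸ sum_le_sum_of_subset (range_subset_range.mpr hin)
      have : (∑ j ∈ range i, (u j : ℝ)) ≤ k := by exact_mod_cast hik
      linarith
    · have : (∑ j ∈ range i, (u j : ℝ)) ≤
          (∑ j ∈ T, u j : ℕ) + (#{j ∈ C | j < i} : ℕ) * (t : ℝ) := by
        exact_mod_cast hprefix i hi
      linarith
  rw [← sum_filter_add_sum_filter_not (range n) P, hTsum]
  exact add_le_add_right hCsum _

theorem stmt_2_general (k t d g : ℕ) (ht : 1 ≤ t)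
    (hkgt : k = g * t) (hdk : k ≤ d) (α β : ℝ) (hα : 0 ≤ α) (hβ : 0 ≤ β)
    (g' : ℕ) (u : ℕ → ℕ)
    (hu : ∀ i < g', 1 ≤ u i ∧ u i ≤ t)
    (hsum : ∑ i ∈ Finset.range g', u i = k) :
    (∑ i ∈ Finset.range g,
        min ((t : ℝ) * α) (((d : ℝ) - i * t) * β)) ≤
      ∑ i ∈ Finset.range g',
        min ((u i : ℝ) * α)
          (((d : ℝ) - ∑ j ∈ Finset.range i, (u j : ℝ)) * β) := by
  have hd : (k : ℝ) ≤ d := by exact_mod_cast hdk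
  obtain ⟨a, m, hak, hkam, hlower⟩ :=
    exists_le_sum_min (α := α) u (fun i hi => (hu i hi).2) hsum hd hβ
  subst hkgt
  refine le_trans ?_ hlower
  exact sum_range_min_le_of_le_add_mul ht hak hkam (by exact_mod_cast hd) hα hβ

/-- Among all recovery scenarios `u` (compositions of `k` with parts in `[1,t]`),
the concurrent-repair cut-set quantity
`∑ᵢ min(uᵢ α, (d - ∑_{j<i} uⱼ) β)` is minimized by the uniform sequence
`u = (t,…,t)` of length `g = k/t`. -/
theorem stmt_2 (k t d g : ℕ) (hk : 1 ≤ k) (ht : 1 ≤ t) (hg : 1 ≤ g)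
    (hkgt : k = g * t) (hdk : k ≤ d) (α β : ℝ) (hα : 0 ≤ α) (hβ : 0 ≤ β)
    (g' : ℕ) (u : ℕ → ℕ)
    (hu : ∀ i < g', 1 ≤ u i ∧ u i ≤ t)
    (hsum : ∑ i ∈ Finset.range g', u i = k) :
    (∑ i ∈ Finset.range g,
        min ((t : ℝ) * α) (((d : ℝ) - i * t) * β)) ≤
      ∑ i ∈ Finset.range g',
        min ((u i : ℝ) * α)
          (((d : ℝ) - ∑ j ∈ Finset.range i, (u j : ℝ)) * β) :=
  stmt_2_general k t d g ht hkgt hdk α β hα hβ g' u hu hsum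
end

section
/- Let k, t, d be positive integers with t | k, g = k/t, d ≥ k, and let B > 0. If α = B/k and the per-helper download is β = Bt/(k(d-k+t)), so that the total repair bandwidth is γ = dβ = Btd/(k(d-k+t)), then Σ_{i=0}^{g-1} min(t·α, (d - i·t)·β) ≥ B, with equality when γ = Btd/(k(d-k+t)). -/
open Finset

/-- Concurrent-repair minimum-storage point: with `α = B/k` and per-helper
download `β = Bt/(k(d-k+t))` (total `γ = Btd/(k(d-k+t))`), the capacity
`∑_{i=0}^{g-1} min(tα, (d-it)β)` equals (in particular, is at least) `B`. -/
theorem stmt_3 (k t d g : ℕ) (ht : 1 ≤ t) (hk : 1 ≤ k) (htk : t ∣ k)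
    (hg : g = k / t) (hdk : k ≤ d) (B α β : ℝ) (hB : 0 < B)
    (hα : α = B / k)
    (hβ : β = B * t / (k * ((d : ℝ) - k + t))) :
    (∑ i ∈ Finset.range g,
        min ((t : ℝ) * α) (((d : ℝ) - i * t) * β)) ≥ B ∧
    (∑ i ∈ Finset.range g,
        min ((t : ℝ) * α) (((d : ℝ) - i * t) * β)) = B := by
  have hkpos : (0:ℝ) < k := by exact_mod_cast hk
  have htpos : (0:ℝ) < t := by exact_mod_cast ht
  have hden : (0:ℝ) < (d : ℝ) - k + t := by
    have : (k:ℝ) ≤ d := by exact_mod_cast hdk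
    linarith
  have hgt : g * t = k := by
    rw [hg]; exact Nat.div_mul_cancel htk
  have hmin : ∀ i ∈ Finset.range g,
      min ((t : ℝ) * α) (((d : ℝ) - i * t) * β) = (t : ℝ) * α := by
    intro i hi
    apply min_eq_left
    have hi' : i + 1 ≤ g := Finset.mem_range.mp hi
    have hit : (i : ℝ) * t + t ≤ k := by
      have : (i + 1) * t ≤ g * t := Nat.mul_le_mul_right t hi'
      rw [hgt] at this
      have := (by exact_mod_cast this : ((i+1) * t : ℝ) ≤ k)
      push_cast at this ⊢
      linarith
    have hd : (d:ℝ) - k + t ≤ (d:ℝ) - i * t := by linarith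
    rw [hα, hβ]
    have key : (t:ℝ) * (B / k) * (k * ((d:ℝ) - k + t)) ≤ ((d:ℝ) - i*t) * (B * t) := by
      have h1 : (t:ℝ) * (B / k) * (k * ((d:ℝ) - k + t)) = B * t * ((d:ℝ) - k + t) := by
        field_simp
      rw [h1]
      nlinarith [mul_pos hB htpos]
    calc (t:ℝ) * (B / k) ≤ ((d:ℝ) - i*t) * (B * t) / (k * ((d:ℝ) - k + t)) := by
          rw [le_div_iff₀ (by positivity)]; exact key
      _ = ((d:ℝ) - i*t) * (B * t / (k * ((d:ℝ) - k + t))) := by ring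
  have hsum : (∑ i ∈ Finset.range g,
      min ((t : ℝ) * α) (((d : ℝ) - i * t) * β)) = B := by
    rw [Finset.sum_congr rfl hmin, Finset.sum_const, Finset.card_range, hα]
    have : (g:ℝ) * t = k := by exact_mod_cast hgt
    rw [nsmul_eq_mul]
    field_simp
    nlinarith [this]
  exact ⟨le_of_eq hsum.symm, hsum⟩
end

section
/- Let k, t, d be positive integers with t | k, g = k/t, d ≥ k, and let B > 0. If α = 2Bd/(k(2d-k+t)) and β = 2Bt/(k(2d-k+t)), then Σ_{i=0}^{g-1} min(t·α, (d-i·t)·β) = B. -/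
open Finset

/-
The choice of `α` and `β` gives `t α = d β`, so every term of the sum is `(d - i t) β`. These form
an arithmetic progression with sum `g (2d - k + t) β / 2`, where `k = g t`, and the value of `β`
makes this exactly `B`.
-/

theorem two_mul_sum_range_sub_mul {R : Type*} [CommRing R] (g : ℕ) (d t : R) :
    2 * ∑ i ∈ range g, (d - i * t) = g * (2 * d - g * t + t) := by
  induction g with
  | zero => simp
  | succ g ih =>
    rw [sum_range_succ, mul_add, ih]
    push_cast
    ring

theorem sum_range_min_mul_sub_mul {R : Type*} [Field R] [LinearOrder R] [IsStrictOrderedRing R]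
    (g : ℕ) {d t β : R} (ht : 0 ≤ t) (hβ : 0 ≤ β) :
    ∑ i ∈ range g, min (d * β) ((d - i * t) * β) = g * (2 * d - g * t + t) / 2 * β := by
  have hmin : ∀ i ∈ range g, min (d * β) ((d - i * t) * β) = (d - i * t) * β := fun i _ =>
    min_eq_right (mul_le_mul_of_nonneg_right (sub_le_self d (by positivity)) hβ)
  rw [sum_congr rfl hmin, ← sum_mul]
  congr 1
  rw [eq_div_iff two_ne_zero, mul_comm, two_mul_sum_range_sub_mul]

theorem stmt_4_general (k t d g : ℕ) (hk : 1 ≤ k) (htk : t ∣ k)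
    (hg : g = k / t) (hdk : k ≤ d) (B α β : ℝ) (hB : 0 < B)
    (hα : α = 2 * B * d / (k * (2 * (d : ℝ) - k + t)))
    (hβ : β = 2 * B * t / (k * (2 * (d : ℝ) - k + t))) :
    (∑ i ∈ Finset.range g,
        min ((t : ℝ) * α) (((d : ℝ) - i * t) * β)) = B := by
  have hk_eq : (k : ℝ) = g * t := by rw [hg]; exact_mod_cast (Nat.div_mul_cancel htk).symm
  have hkR : (1 : ℝ) ≤ k := by exact_mod_cast hk
  have htR : (0 : ℝ) ≤ t := t.cast_nonneg
  have hdkR : (k : ℝ) ≤ d := by exact_mod_cast hdk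
  have hden : (0 : ℝ) < 2 * d - k + t := by linarith
  have hβ_nonneg : 0 ≤ β := by rw [hβ]; positivity
  have htα : (t : ℝ) * α = d * β := by rw [hα, hβ]; ring
  rw [htα, sum_range_min_mul_sub_mul g htR hβ_nonneg, hβ, ← hk_eq]
  field_simp
  exact hk_eq.symm

/-- Concurrent-repair minimum-bandwidth point: with
`α = 2Bd/(k(2d-k+t))` and `β = 2Bt/(k(2d-k+t))`, the capacity equals `B`. -/
theorem stmt_4 (k t d g : ℕ) (ht : 1 ≤ t) (hk : 1 ≤ k) (htk : t ∣ k)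
    (hg : g = k / t) (hdk : k ≤ d) (B α β : ℝ) (hB : 0 < B)
    (hα : α = 2 * B * d / (k * (2 * (d : ℝ) - k + t)))
    (hβ : β = 2 * B * t / (k * (2 * (d : ℝ) - k + t))) :
    (∑ i ∈ Finset.range g,
        min ((t : ℝ) * α) (((d : ℝ) - i * t) * β)) = B :=
  stmt_4_general k t d g hk htk hg hdk B α β hB hα hβ
end

section
/- Let F be a finite field, B = k·α with α = d-k+r, and let G_1,…,G_n be B×α matrices over F such that any k of them concatenated form an invertible B×B matrix (MDS property). Let new coding matrices G^new_ℓ = [G_{x_1}P_{x_1}, …, G_{x_d}P_{x_d}]·Z^{(ℓ)} for ℓ = 1,…,r, where P_{x_w} are α×β projection matrices and Z^{(ℓ)} are dβ×α matrices. If for some q with 1 ≤ q ≤ r the matrix [G_{y_1},…,G_{y_{k-q}}, G^new_{1},…,G^new_{q}] is invertible for all choices of k−q old nodes, then necessarily q·α ≤ β·(d-k+q). -/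
/-!
Take the `k - q` old nodes to be the first `k - q` helpers. Each new coding vector is a
combination of the downloaded strips `G_{x_w} P_{x_w}`, and for the helpers among the chosen old
nodes these strips already lie in the span of the old columns. So the `B` columns of the full-rank
matrix `[G_{y_1}, …, G_{y_{k-q}}, Gⁿᵉʷ_1, …, Gⁿᵉʷ_q]` lie in a space spanned by `(k - q)α` old
columns and `(d - k + q)β` strips, whence `kα ≤ (k - q)α + (d - k + q)β`.
-/

open Submodule Set

namespace Matrix

variable {R K m n o : Type*}

def blockCols {ι : Type*} (A : ι → Matrix m n R) : Matrix m (ι × n) R :=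
  of fun i p => A p.1 i p.2

theorem col_mul_mem_of_col_mem [CommSemiring R] [Fintype n] {W : Submodule R (m → R)}
    {A : Matrix m n R} (hA : ∀ j, A.col j ∈ W) (B : Matrix n o R) (j : o) :
    (A * B).col j ∈ W := by
  have hsum : (A * B).col j = ∑ l, B l j • A.col l := by
    ext i
    simp [mul_apply, mul_comm]
  exact hsum ▸ W.sum_mem fun l _ => W.smul_mem _ (hA l)

theorem rank_le_rank_of_col_mem_span [Field K] [Fintype m] [Fintype n] [Fintype o]
    (M : Matrix m n K) (N : Matrix m o K) (h : ∀ j, M.col j ∈ span K (range N.col)) :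
    M.rank ≤ N.rank := by
  rw [rank_eq_finrank_span_cols, rank_eq_finrank_span_cols]
  exact Submodule.finrank_mono (span_le.2 (range_subset_iff.2 h))

theorem rank_fromCols_blockCols_le_of_repair [Field K] {a b c H O S ι : Type*} [Fintype m]
    [Fintype a] [Fintype b] [Fintype c] [Fintype H] [Fintype O] [Fintype S] [Fintype ι]
    (A : H → Matrix m a K) (P : H → Matrix a b K) (Z : ι → Matrix (H × b) c K)
    (New : ι → Matrix m c K) (hNew : ∀ l, New l = blockCols (fun h => A h * P h) * Z l)
    (e : O → H) (f : S → H) (hcover : ∀ h, (∃ o, e o = h) ∨ ∃ s, f s = h) :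
    (fromCols (blockCols fun o => A (e o)) (blockCols New)).rank ≤
      Fintype.card O * Fintype.card a + Fintype.card S * Fintype.card b := by
  set N := fromCols (blockCols fun o => A (e o)) (blockCols fun s => A (f s) * P (f s))
  have hold : ∀ o t, (A (e o)).col t ∈ span K (range N.col) :=
    fun o t => subset_span ⟨Sum.inl (o, t), rfl⟩
  have hstrip : ∀ h t, (A h * P h).col t ∈ span K (range N.col) := by
    intro h t
    rcases hcover h with ⟨o, rfl⟩ | ⟨s, rfl⟩
    · exact col_mul_mem_of_col_mem (hold o) _ t
    · exact subset_span ⟨Sum.inr (s, t), rfl⟩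
  have hwidth : N.rank ≤ Fintype.card O * Fintype.card a + Fintype.card S * Fintype.card b := by
    simpa only [Fintype.card_sum, Fintype.card_prod] using N.rank_le_card_width
  refine (rank_le_rank_of_col_mem_span _ N ?_).trans hwidth
  rintro (⟨o, t⟩ | ⟨l, t⟩)
  · exact hold o t
  · change (New l).col t ∈ _
    rw [hNew]
    exact col_mul_mem_of_col_mem (A := blockCols fun h => A h * P h)
      (fun p => hstrip p.1 p.2) _ t

end Matrix

theorem stmt_17_general (F : Type*) [Field F]
    (n k d r α β B : ℕ) (hkd : k ≤ d)
    (hrk : r ≤ k)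
    (hB : B = k * α)
    (G : Fin n → Matrix (Fin B) (Fin α) F)
    (x : Fin d → Fin n) (hx : Function.Injective x)
    (P : Fin d → Matrix (Fin α) (Fin β) F)
    (Z : Fin r → Matrix (Fin d × Fin β) (Fin α) F)
    (Gnew : Fin r → Matrix (Fin B) (Fin α) F)
    (hGnew : ∀ ℓ : Fin r, Gnew ℓ =
        (Matrix.of fun (i : Fin B) (p : Fin d × Fin β) =>
            (G (x p.1) * P p.1) i p.2) * Z ℓ)
    (q : ℕ) (hqr : q ≤ r)
    (hrank : ∀ y : Fin (k - q) → Fin n, Function.Injective y →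
        (Matrix.of fun (i : Fin B)
            (p : (Fin (k - q) × Fin α) ⊕ (Fin q × Fin α)) =>
          Sum.elim (fun s => G (y s.1) i s.2)
            (fun s => Gnew (Fin.castLE hqr s.1) i s.2) p).rank = B) :
    q * α ≤ β * (d - k + q) := by
  have hqk : q ≤ k := hqr.trans hrk
  have hmd : k - q ≤ d := (Nat.sub_le k q).trans hkd
  let rest : Fin (d - (k - q)) → Fin d := fun t => ⟨k - q + t, by omega⟩
  have hcover : ∀ w, (∃ s, Fin.castLE hmd s = w) ∨ ∃ t, rest t = w := by
    intro w
    by_cases hw : (w : ℕ) < k - q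
    · exact Or.inl ⟨⟨w, hw⟩, rfl⟩
    · exact Or.inr ⟨⟨w - (k - q), by omega⟩, Fin.ext (by dsimp only [rest]; omega)⟩
  have hbound := Matrix.rank_fromCols_blockCols_le_of_repair (fun w => G (x w)) P
    (fun l => Z (Fin.castLE hqr l)) (fun l => Gnew (Fin.castLE hqr l)) (fun l => hGnew _)
    (Fin.castLE hmd) rest hcover
  have hcount := (hrank _ (hx.comp (Fin.castLE_injective hmd))).symm.trans_le hbound
  simp only [Fintype.card_fin] at hcount
  have hsplit : k * α = (k - q) * α + q * α := by rw [← add_mul, Nat.sub_add_cancel hqk]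
  rw [show d - (k - q) = d - k + q by omega] at hcount
  linarith

/-- Rank/dimension-count bound for regenerating `r` new MDS coding matrices
from `d` helpers: if the old matrices `G₁,…,Gₙ` have the MDS property
(any `k` concatenated have full rank `B = kα`), the new matrices are
`Gⁿᵉʷ_ℓ = [G_{x₁}P_{x₁},…,G_{x_d}P_{x_d}]·Z⁽ℓ⁾`, and for some
`1 ≤ q ≤ r` every choice of `k-q` old nodes together with
`Gⁿᵉʷ₁,…,Gⁿᵉʷ_q` has full rank `B`, then `qα ≤ β(d-k+q)`. -/
theorem stmt_17 (F : Type*) [Field F] [Fintype F]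
    (n k d r α β B : ℕ) (hk : 1 ≤ k) (hkd : k ≤ d) (hdn : d ≤ n)
    (hr1 : 1 ≤ r) (hrk : r ≤ k)
    (hα : α = d - k + r) (hB : B = k * α)
    (G : Fin n → Matrix (Fin B) (Fin α) F)
    (hMDS : ∀ x : Fin k → Fin n, Function.Injective x →
        (Matrix.of fun (i : Fin B) (p : Fin k × Fin α) =>
            G (x p.1) i p.2).rank = B)
    (x : Fin d → Fin n) (hx : Function.Injective x)
    (P : Fin d → Matrix (Fin α) (Fin β) F)
    (Z : Fin r → Matrix (Fin d × Fin β) (Fin α) F)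
    (Gnew : Fin r → Matrix (Fin B) (Fin α) F)
    (hGnew : ∀ ℓ : Fin r, Gnew ℓ =
        (Matrix.of fun (i : Fin B) (p : Fin d × Fin β) =>
            (G (x p.1) * P p.1) i p.2) * Z ℓ)
    (q : ℕ) (hq1 : 1 ≤ q) (hqr : q ≤ r)
    (hrank : ∀ y : Fin (k - q) → Fin n, Function.Injective y →
        (Matrix.of fun (i : Fin B)
            (p : (Fin (k - q) × Fin α) ⊕ (Fin q × Fin α)) =>
          Sum.elim (fun s => G (y s.1) i s.2)
            (fun s => Gnew (Fin.castLE hqr s.1) i s.2) p).rank = B) :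
    q * α ≤ β * (d - k + q) :=
  stmt_17_general F n k d r α β B hkd hrk hB G x hx P Z Gnew hGnew q hqr hrank
end

section
/- Let k, t, d be positive integers with t | k, g = k/t, d ≥ k, B > 0, and suppose B ≤ Σ_{j=0}^{g-1}(d-jt)β for given β > 0. Then the minimal storage α* with C(α*,β) ≥ B (where C(α,β) = Σ_{i=0}^{g-1} min(tα,(d-it)β)) is α* = (B − Σ_{j=g-i}^{g-1}(d-jt)β)/(k − i t) for the unique index i ∈ {0,…,g-1} such that B lies in the interval ( (k-it)(d-(g-i)t)β/t + Σ_{j=g-i}^{g-1}(d-jt)β , (k-it)(d-(g-i-1)t)β/t + Σ_{j=g-i}^{g-1}(d-jt)β ]; in particular α* = B/k when B ≤ k(d-(g-1)t)β/t. -/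
open Finset

private lemma sum_split' (m g : ℕ) (hm : m ≤ g) (f : ℕ → ℝ) :
    ∑ j ∈ Finset.range g, f j
      = ∑ j ∈ Finset.range m, f j + ∑ j ∈ Finset.Ico m g, f j := by
  rw [Finset.range_eq_Ico, Finset.range_eq_Ico]
  exact (Finset.sum_Ico_consecutive (f := f) (Nat.zero_le m) hm).symm

private lemma sum_min_le' (g m : ℕ) (hm : m ≤ g) (c : ℕ → ℝ) (x : ℝ) :
    ∑ j ∈ Finset.range g, min x (c j)
      ≤ m * x + ∑ j ∈ Finset.Ico m g, c j := by
  rw [sum_split' m g hm]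
  have h1 : ∑ j ∈ Finset.range m, min x (c j) ≤ m * x := by
    calc ∑ j ∈ Finset.range m, min x (c j) ≤ ∑ _j ∈ Finset.range m, x := by
          apply Finset.sum_le_sum; intro j _; exact min_le_left _ _
      _ = m * x := by simp [mul_comm]
  have h2 : ∑ j ∈ Finset.Ico m g, min x (c j) ≤ ∑ j ∈ Finset.Ico m g, c j := by
    apply Finset.sum_le_sum; intro j _; exact min_le_right _ _
  linarith

private lemma sum_min_eq' (g m : ℕ) (hm : m ≤ g) (c : ℕ → ℝ) (x : ℝ)
    (hA : ∀ j < m, x ≤ c j) (hC : ∀ j, m ≤ j → j < g → c j ≤ x) :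
    ∑ j ∈ Finset.range g, min x (c j)
      = m * x + ∑ j ∈ Finset.Ico m g, c j := by
  rw [sum_split' m g hm]
  have h1 : ∑ j ∈ Finset.range m, min x (c j) = m * x := by
    rw [Finset.sum_congr rfl (fun j hj => min_eq_left (hA j (Finset.mem_range.mp hj)))]
    simp [mul_comm]
  have h2 : ∑ j ∈ Finset.Ico m g, min x (c j) = ∑ j ∈ Finset.Ico m g, c j := by
    apply Finset.sum_congr rfl
    intro j hj
    have := Finset.mem_Ico.mp hj
    exact min_eq_right (hC j this.1 this.2)
  rw [h1, h2]

set_option maxHeartbeats 1000000 in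
/-- Inverse form of the concurrent-repair tradeoff: for given `β > 0` with
`B ≤ ∑_{j<g}(d-jt)β`, the minimal storage `α*` with
`∑_{i<g} min(tα*,(d-it)β) ≥ B` is `α* = (B - ∑_{j=g-i}^{g-1}(d-jt)β)/(k-it)`
on the corresponding breakpoint interval of `B`; in particular `α* = B/k`
when `B ≤ k(d-(g-1)t)β/t`. -/
theorem stmt_19 (k t d g : ℕ) (ht : 1 ≤ t) (hk : 1 ≤ k) (htk : t ∣ k)
    (hg : g = k / t) (hdk : k ≤ d) (B β : ℝ) (hB : 0 < B) (hβ : 0 < β)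
    (hBle : B ≤ ∑ j ∈ Finset.range g, ((d : ℝ) - j * t) * β) :
    (B ≤ (k : ℝ) * ((d : ℝ) - ((g : ℝ) - 1) * t) * β / t →
      IsLeast {a : ℝ | 0 ≤ a ∧
          (∑ i ∈ Finset.range g,
            min ((t : ℝ) * a) (((d : ℝ) - i * t) * β)) ≥ B}
        (B / k)) ∧
    (∀ i : ℕ, 1 ≤ i → i < g →
      (∑ j ∈ Finset.Ico (g - i) g, ((d : ℝ) - j * t) * β)
          + ((k : ℝ) - i * t) * (((d : ℝ) - ((g : ℝ) - i) * t) * β) / t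
        < B →
      B ≤ (∑ j ∈ Finset.Ico (g - i) g, ((d : ℝ) - j * t) * β)
          + ((k : ℝ) - i * t) * (((d : ℝ) - ((g : ℝ) - i - 1) * t) * β) / t →
      IsLeast {a : ℝ | 0 ≤ a ∧
          (∑ i ∈ Finset.range g,
            min ((t : ℝ) * a) (((d : ℝ) - i * t) * β)) ≥ B}
        ((B - ∑ j ∈ Finset.Ico (g - i) g, ((d : ℝ) - j * t) * β)
          / ((k : ℝ) - i * t))) := by
  have htr : (0:ℝ) < t := by exact_mod_cast ht
  have hkr : (0:ℝ) < k := by exact_mod_cast hk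
  have hkgt : k = g * t := by
    rw [hg, Nat.div_mul_cancel htk]
  have hkgtr : (k:ℝ) = (g:ℝ) * t := by exact_mod_cast hkgt
  have hg1 : 1 ≤ g := by
    by_contra h
    push_neg at h
    interval_cases g
    omega
  have hgr : (0:ℝ) < g := by exact_mod_cast hg1
  have hdr : (k:ℝ) ≤ d := by exact_mod_cast hdk
  constructor
  · -- case i = 0
    intro hB1
    constructor
    · constructor
      · positivity
      · have key : ∀ j < g, (t:ℝ) * (B / k) ≤ ((d:ℝ) - j * t) * β := by
          intro j hj
          have hj1 : (j:ℝ) ≤ (g:ℝ) - 1 := by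
            have : (j:ℝ) + 1 ≤ g := by exact_mod_cast hj
            linarith
          have h1 : (t:ℝ) * (B / k) ≤ ((d:ℝ) - ((g:ℝ) - 1) * t) * β := by
            rw [le_div_iff₀ htr] at hB1
            rw [← mul_div_assoc, div_le_iff₀ hkr]
            nlinarith [hB1]
          have h2 : ((d:ℝ) - ((g:ℝ) - 1) * t) * β ≤ ((d:ℝ) - j * t) * β := by
            nlinarith [mul_nonneg (mul_nonneg (sub_nonneg.mpr hj1) htr.le) hβ.le]
          linarith
        have : ∑ i ∈ Finset.range g,
            min ((t:ℝ) * (B / k)) (((d:ℝ) - i * t) * β) = g * ((t:ℝ) * (B / k)) := by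
          rw [Finset.sum_congr rfl
            (fun j hj => min_eq_left (key j (Finset.mem_range.mp hj)))]
          simp [mul_comm]
        rw [this]
        have : (g:ℝ) * ((t:ℝ) * (B / k)) = B := by
          field_simp [hkgtr]
          linarith [hkgtr]
        rw [this]
    · intro a ha
      obtain ⟨ha0, hsum⟩ := ha
      have hle := sum_min_le' g g le_rfl (fun j => ((d:ℝ) - j * t) * β) ((t:ℝ) * a)
      simp only [Finset.Ico_self, Finset.sum_empty, add_zero] at hle
      have : B ≤ (g:ℝ) * ((t:ℝ) * a) := le_trans hsum hle
      rw [div_le_iff₀ hkr]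
      nlinarith
  · intro i hi1 hig h1 h2
    set m := g - i with hm_def
    have hmi : m + i = g := Nat.sub_add_cancel hig.le
    have hmg : m ≤ g := Nat.sub_le g i
    have hm1 : 1 ≤ m := by omega
    have hmr0 : (m:ℝ) = (g:ℝ) - i := by
      have : (m:ℝ) + i = g := by exact_mod_cast hmi
      linarith
    have hmr : (0:ℝ) < m := by exact_mod_cast hm1
    have hir : (1:ℝ) ≤ i := by exact_mod_cast hi1
    have hkit : (k:ℝ) - i * t = m * t := by rw [hkgtr, hmr0]; ring
    set S := ∑ j ∈ Finset.Ico m g, ((d:ℝ) - j * t) * β with hS_def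
    have hdm : (0:ℝ) < (d:ℝ) - m * t := by
      have e1 : (m:ℝ) * t = (g:ℝ) * t - (i:ℝ) * t := by rw [hmr0]; ring
      have e2 : (1:ℝ) * t ≤ (i:ℝ) * t := mul_le_mul_of_nonneg_right hir htr.le
      linarith [hdr, hkgtr.le, hkgtr.ge]
    have h1' : S + (m:ℝ) * (((d:ℝ) - m * t) * β) < B := by
      have e : ((k:ℝ) - i * t) * (((d:ℝ) - ((g:ℝ) - i) * t) * β) / t
          = (m:ℝ) * (((d:ℝ) - m * t) * β) := by
        rw [hkit, ← hmr0]
        field_simp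
      rw [e] at h1; exact h1
    have h2' : B ≤ S + (m:ℝ) * (((d:ℝ) - ((m:ℝ) - 1) * t) * β) := by
      have e : ((k:ℝ) - i * t) * (((d:ℝ) - ((g:ℝ) - i - 1) * t) * β) / t
          = (m:ℝ) * (((d:ℝ) - ((m:ℝ) - 1) * t) * β) := by
        rw [hkit, ← hmr0]
        field_simp
      rw [e] at h2; exact h2
    have hBS : (m:ℝ) * (((d:ℝ) - m * t) * β) < B - S := by linarith
    have hBS0 : 0 < B - S := by nlinarith [mul_pos hmr (mul_pos hdm hβ)]
    rw [hkit]
    set x : ℝ := (B - S) / m with hx_def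
    have htx : (t:ℝ) * ((B - S) / ((m:ℝ) * t)) = x := by
      rw [hx_def]; field_simp
    constructor
    · constructor
      · exact div_nonneg hBS0.le (by positivity)
      · rw [htx]
        have hxub : x ≤ ((d:ℝ) - ((m:ℝ) - 1) * t) * β := by
          rw [hx_def, div_le_iff₀ hmr]
          linarith [h2']
        have hxlb : ((d:ℝ) - (m:ℝ) * t) * β ≤ x := by
          rw [hx_def, le_div_iff₀ hmr]
          linarith [h1']
        have heq := sum_min_eq' g m hmg (fun j => ((d:ℝ) - j * t) * β) x
          (by
            intro j hj
            have hj1 : (j:ℝ) ≤ (m:ℝ) - 1 := by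
              have : (j:ℝ) + 1 ≤ m := by exact_mod_cast hj
              linarith
            have : ((d:ℝ) - ((m:ℝ) - 1) * t) * β ≤ ((d:ℝ) - j * t) * β := by
              nlinarith [mul_nonneg (mul_nonneg (sub_nonneg.mpr hj1) htr.le) hβ.le]
            exact le_trans hxub this)
          (by
            intro j hjm hjg
            have hjm' : (m:ℝ) ≤ j := by exact_mod_cast hjm
            have : ((d:ℝ) - j * t) * β ≤ ((d:ℝ) - (m:ℝ) * t) * β := by
              nlinarith [mul_nonneg (mul_nonneg (sub_nonneg.mpr hjm') htr.le) hβ.le]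
            exact le_trans this hxlb)
        rw [heq]
        have : (m:ℝ) * x = B - S := by
          rw [hx_def]; field_simp
        rw [this, ← hS_def]
        linarith
    · intro a ha
      obtain ⟨ha0, hsum⟩ := ha
      have hle := sum_min_le' g m hmg (fun j => ((d:ℝ) - j * t) * β) ((t:ℝ) * a)
      have : B ≤ (m:ℝ) * ((t:ℝ) * a) + S := le_trans hsum hle
      rw [div_le_iff₀ (by positivity : (0:ℝ) < (m:ℝ) * t)]
      linarith [this]
end
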